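/- Let n ≥ 4, let G be a finite simple graph, let S be a sibling equivalence class of G, and let G' be the graph obtained from G by contracting S to a single vertex (the vertex set of G' is (V(G) \ S) together with one new vertex v', with v' adjacent to exactly the neighbors of S outside S, and all other adjacencies unchanged). If G contains an induced cycle on n vertices, then G' contains an induced cycle on n vertices. -/

import Mathlib

open SimpleGraph

universe u

/-- The closed neighborhood of a vertex. -/
def closedNbhd {V : Type u} (G : SimpleGraph V) (v : V) : Set V :=
  insert v (G.neighborSet v)

/-- Two vertices are siblings if they share the same closed neighborhood. -/
def Sibling {V : Type u} (G : SimpleGraph V) (u v : V) : Prop :=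
  closedNbhd G u = closedNbhd G v

/-- A leaf is a vertex of degree one. -/
def IsLeaf {V : Type u} (G : SimpleGraph V) (v : V) : Prop :=
  Nat.card (G.neighborSet v) = 1

/-- The tuft number: the maximal number of leaves adjacent to a single vertex. -/
noncomputable def tuftNumber {V : Type u} (G : SimpleGraph V) : ℕ :=
  ⨆ v : V, Nat.card {u | IsLeaf G u ∧ G.Adj v u}

/-- The sibling number: the maximum over vertices `v` of the number of vertices sharing
the closed neighborhood of `v`, minus one. -/
noncomputable def siblingNumber {V : Type u} (G : SimpleGraph V) : ℕ :=
  ⨆ v : V, (Nat.card {u | Sibling G u v} - 1)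

/-- The complete graph on two vertices. -/
def K2 : SimpleGraph (Fin 2) := ⊤

/-- The sibling relation as a setoid. -/
def siblingSetoid {V : Type u} (G : SimpleGraph V) : Setoid V :=
  ⟨Sibling G, ⟨fun _ => rfl, fun {_ _} h => Eq.symm h, fun {_ _ _} h h' => Eq.trans h h'⟩⟩

/-- `rho G` is the quotient of `G` by the sibling relation: vertices are sibling
equivalence classes, two distinct classes being adjacent iff some pair of
representatives is adjacent. -/
def rho {V : Type u} (G : SimpleGraph V) : SimpleGraph (Quotient (siblingSetoid G)) where
  Adj A B := A ≠ B ∧ ∃ u v : V, Quotient.mk (siblingSetoid G) u = A ∧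
      Quotient.mk (siblingSetoid G) v = B ∧ G.Adj u v
  symm := by
    constructor
    rintro A B ⟨hne, u, v, hu, hv, h⟩
    exact ⟨hne.symm, v, u, hv, hu, h.symm⟩
  loopless := by
    constructor
    rintro A ⟨hne, -⟩
    exact hne rfl

/-- `lamS G S` is the induced subgraph on the complement of `S`. -/
def lamS {V : Type u} (G : SimpleGraph V) (S : Set V) : SimpleGraph ↥(Sᶜ) :=
  SimpleGraph.induce Sᶜ G

/-- `lam G` is the induced subgraph on the set of non-leaf vertices. -/
def lam {V : Type u} (G : SimpleGraph V) : SimpleGraph ↥{v : V | ¬ IsLeaf G v} :=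
  SimpleGraph.induce {v : V | ¬ IsLeaf G v} G

/-- A finite graph, bundled with its vertex type. -/
structure FinGraph : Type (u + 1) where
  V : Type u
  [finite : Finite V]
  G : SimpleGraph V

attribute [instance] FinGraph.finite

/-- One reduction step: remove all leaves, then contract each sibling class to a point. -/
def redStep (X : FinGraph.{u}) : FinGraph.{u} :=
  ⟨Quotient (siblingSetoid (lam X.G)), rho (lam X.G)⟩

/-- The reduction of a finite graph: iterate `redStep` until it stabilizes (up to
isomorphism this happens after at most `Nat.card X.V` steps). -/
noncomputable def reduction (X : FinGraph.{u}) : FinGraph.{u} :=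
  redStep^[Nat.card X.V] X

/-- `G` contains an induced cycle on `n` vertices. -/
def HasInducedCycle {V : Type u} (G : SimpleGraph V) (n : ℕ) : Prop :=
  ∃ s : Set V, Nonempty (SimpleGraph.induce s G ≃g cycleGraph n)

/-- A graph is chordal if it has no induced cycle on four or more vertices. -/
def Chordal {V : Type u} (G : SimpleGraph V) : Prop :=
  ∀ m : ℕ, 4 ≤ m → ¬ HasInducedCycle G m

/-- The setoid identifying isomorphic graphs on `Fin n` satisfying a property `P`. -/
def graphSetoid (n : ℕ) (P : SimpleGraph (Fin n) → Prop) :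
    Setoid {G : SimpleGraph (Fin n) // P G} :=
  ⟨fun G H => Nonempty (G.1 ≃g H.1),
    ⟨fun _ => ⟨Iso.refl⟩, fun ⟨e⟩ => ⟨e.symm⟩, fun ⟨e⟩ ⟨f⟩ => ⟨e.trans f⟩⟩⟩

/-- The number of isomorphism classes of graphs on `n` vertices satisfying `P`. -/
noncomputable def numClasses (n : ℕ) (P : SimpleGraph (Fin n) → Prop) : ℕ :=
  Nat.card (Quotient (graphSetoid n P))

/-- The graph obtained from `G` by contracting the set `S` to a single new vertex
(`none`): its vertices are the vertices outside `S` together with one new vertex,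
which is adjacent to exactly the neighbors of `S` outside `S`, all other adjacencies
being unchanged. -/
def contractClass {V : Type u} (G : SimpleGraph V) (S : Set V) :
    SimpleGraph (Option ↥(Sᶜ)) :=
  SimpleGraph.fromRel (fun x y =>
    match x, y with
    | some u, some v => G.Adj (u : V) (v : V)
    | some u, none => ∃ w ∈ S, G.Adj (u : V) w
    | none, _ => False)

/-!
Two distinct siblings are adjacent, and in a cycle of length at least four no two adjacent
vertices have the same closed neighbourhood; so an induced `n`-cycle meets the sibling class `S`
in at most one vertex. Sending `S` to the new vertex and every other vertex to itself is then an
induced embedding of the cycle into the contraction, since a vertex outside `S` is adjacent to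
one vertex of `S` exactly when it is adjacent to all of them.
-/

section

variable {V W : Type*} {G : SimpleGraph V} {u v w : V}

lemma Sibling.symm (h : Sibling G u v) : Sibling G v u := Eq.symm h

lemma Sibling.trans (h : Sibling G u v) (h' : Sibling G v w) : Sibling G u w := Eq.trans h h'

lemma Sibling.adj_of_ne (h : Sibling G u v) (hne : u ≠ v) : G.Adj u v := by
  have hu : u ∈ closedNbhd G v := h ▸ Set.mem_insert u _
  exact (hu.resolve_left hne).symm

lemma Sibling.adj_of_adj (h : Sibling G u v) (hw : G.Adj w u) (hne : w ≠ v) : G.Adj w v := by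
  have hw' : w ∈ closedNbhd G v := h ▸ Set.mem_insert_of_mem u hw.symm
  exact (hw'.resolve_left hne).symm

lemma SimpleGraph.Embedding.preimage_closedNbhd {H : SimpleGraph W} (f : H ↪g G) (a : W) :
    f ⁻¹' closedNbhd G (f a) = closedNbhd H a := by
  ext b
  simp [closedNbhd, f.injective.eq_iff, eq_comm]

lemma Sibling.of_embedding {H : SimpleGraph W} (f : H ↪g G) {a b : W}
    (h : Sibling G (f a) (f b)) : Sibling H a b := by
  rw [Sibling, ← f.preimage_closedNbhd, ← f.preimage_closedNbhd, h]

lemma closedNbhd_cycleGraph {n : ℕ} (a : Fin (n + 2)) :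
    closedNbhd (cycleGraph (n + 2)) a = {a, a - 1, a + 1} := by
  rw [closedNbhd, cycleGraph_neighborSet]

open Fin.CommRing in
lemma not_sibling_cycleGraph_add_one {n : ℕ} (a : Fin (n + 4)) :
    ¬ Sibling (cycleGraph (n + 4)) a (a + 1) := by
  intro h
  have hmem : a - 1 ∈ closedNbhd (cycleGraph (n + 4)) (a + 1) :=
    h ▸ by rw [closedNbhd_cycleGraph]; simp
  have cast_ne_zero {k : ℕ} (hk : 0 < k) (hkn : k < n + 4) : ((k : ℕ) : Fin (n + 4)) ≠ 0 := by
    rw [Ne, Fin.natCast_eq_zero]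
    exact fun hdvd ↦ hk.ne' (Nat.eq_zero_of_dvd_of_lt hdvd hkn)
  rw [closedNbhd_cycleGraph] at hmem
  simp only [Set.mem_insert_iff, Set.mem_singleton_iff] at hmem
  rcases hmem with h | h | h
  · exact cast_ne_zero (k := 2) (by norm_num) (by omega) (by push_cast; linear_combination -h)
  · exact cast_ne_zero (k := 1) (by norm_num) (by omega) (by push_cast; linear_combination -h)
  · exact cast_ne_zero (k := 3) (by norm_num) (by omega) (by push_cast; linear_combination -h)

lemma eq_of_sibling_cycleGraph {n : ℕ} (hn : 4 ≤ n) {a b : Fin n}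
    (h : Sibling (cycleGraph n) a b) : a = b := by
  obtain ⟨k, rfl⟩ : ∃ k, n = k + 4 := ⟨n - 4, by omega⟩
  by_contra hne
  rcases cycleGraph_adj.mp (h.adj_of_ne hne) with hab | hab
  · exact not_sibling_cycleGraph_add_one b (sub_eq_iff_eq_add'.mp hab ▸ h.symm)
  · exact not_sibling_cycleGraph_add_one a (sub_eq_iff_eq_add'.mp hab ▸ h)

lemma hasInducedCycle_iff_isIndContained {n : ℕ} :
    HasInducedCycle G n ↔ cycleGraph n ⊴ G := by
  rw [isIndContained_iff_exists_iso_induce, HasInducedCycle]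
  exact exists_congr fun _ ↦ ⟨fun ⟨e⟩ ↦ ⟨e.symm⟩, fun ⟨e⟩ ↦ ⟨e.symm⟩⟩

section contract

variable {S : Set V}

@[simp] lemma contractClass_adj_some_some {a b : ↥Sᶜ} :
    (contractClass G S).Adj (some a) (some b) ↔ G.Adj a b := by
  simp only [contractClass, fromRel_adj, ne_eq, Option.some.injEq]
  exact ⟨fun ⟨_, h⟩ ↦ h.elim id .symm, fun h ↦ ⟨fun hab ↦ h.ne (congrArg _ hab), .inl h⟩⟩

@[simp] lemma contractClass_adj_some_none {a : ↥Sᶜ} :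
    (contractClass G S).Adj (some a) none ↔ ∃ w ∈ S, G.Adj a w := by
  simp [contractClass]

open Classical in
noncomputable def contractMap (S : Set V) (v : V) : Option ↥Sᶜ :=
  if h : v ∈ S then none else some ⟨v, h⟩

lemma contractMap_of_mem (hv : v ∈ S) : contractMap S v = none := dif_pos hv

lemma contractMap_of_notMem (hv : v ∉ S) : contractMap S v = some ⟨v, hv⟩ := dif_neg hv

lemma contractClass_adj_contractMap (hS : ∀ x ∈ S, ∀ y ∈ S, Sibling G x y) (hv : v ∉ S) :
    (contractClass G S).Adj (contractMap S u) (contractMap S v) ↔ G.Adj u v := by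
  rw [contractMap_of_notMem hv]
  by_cases hu : u ∈ S
  · rw [contractMap_of_mem hu, adj_comm, contractClass_adj_some_none, adj_comm]
    refine ⟨fun ⟨w, hw, hvw⟩ ↦ ?_, fun hvu ↦ ⟨u, hu, hvu⟩⟩
    exact (hS w hw u hu).adj_of_adj hvw (ne_of_mem_of_not_mem hu hv).symm
  · rw [contractMap_of_notMem hu, contractClass_adj_some_some]

variable {H : SimpleGraph W}

noncomputable def SimpleGraph.Embedding.toContractClass (φ : H ↪g G) (hS : ∀ x ∈ S, ∀ y ∈ S, Sibling G x y)
    (hφ : (φ ⁻¹' S).Subsingleton) : H ↪g contractClass G S where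
  toFun a := contractMap S (φ a)
  inj' a b hab := by
    by_cases ha : φ a ∈ S
    · by_cases hb : φ b ∈ S
      · exact hφ ha hb
      · simp [contractMap_of_mem ha, contractMap_of_notMem hb] at hab
    · by_cases hb : φ b ∈ S
      · simp [contractMap_of_notMem ha, contractMap_of_mem hb] at hab
      · simpa [contractMap_of_notMem ha, contractMap_of_notMem hb] using hab
  map_rel_iff' {a b} := by
    by_cases hb : φ b ∈ S
    · by_cases ha : φ a ∈ S
      · simp [hφ ha hb]
      · exact (adj_comm ..).trans <| (contractClass_adj_contractMap hS ha).trans <|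
          φ.map_adj_iff.trans (adj_comm ..)
    · exact (contractClass_adj_contractMap hS hb).trans φ.map_adj_iff

end contract

end

theorem hasInducedCycle_contract_general {V : Type} (G : SimpleGraph V)
    (n : ℕ) (hn : 4 ≤ n) (S : Set V) (hS : ∃ x : V, S = {v : V | Sibling G x v})
    (hcyc : HasInducedCycle G n) :
    HasInducedCycle (contractClass G S) n := by
  obtain ⟨x, rfl⟩ := hS
  obtain ⟨φ⟩ := hasInducedCycle_iff_isIndContained.mp hcyc
  have hsib : ∀ u ∈ {v | Sibling G x v}, ∀ w ∈ {v | Sibling G x v}, Sibling G u w :=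
    fun _ hu _ hw ↦ hu.symm.trans hw
  have hφ : (φ ⁻¹' {v | Sibling G x v}).Subsingleton := fun _ ha _ hb ↦
    eq_of_sibling_cycleGraph hn (.of_embedding φ (hsib _ ha _ hb))
  exact hasInducedCycle_iff_isIndContained.mpr ⟨φ.toContractClass hsib hφ⟩

/-- If `G` contains an induced `n`-cycle with `n ≥ 4`, then the graph obtained by
contracting a sibling equivalence class `S` to a single vertex contains an induced
`n`-cycle. -/
theorem hasInducedCycle_contract {V : Type} [Fintype V] (G : SimpleGraph V)
    (n : ℕ) (hn : 4 ≤ n) (S : Set V) (hS : ∃ x : V, S = {v : V | Sibling G x v})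
    (hcyc : HasInducedCycle G n) :
    HasInducedCycle (contractClass G S) n :=
  hasInducedCycle_contract_general G n hn S hS hcyc
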